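/- arXiv:1606.03257 — 2 statements merged into one kernel-verified Lean document; each statement's English description precedes it below -/
import Mathlib

section
/- Let G be a finite simple graph of order n ≥ 3 such that min{δ(G), δ(Ḡ)} = 0, where Ḡ is the complement of G. Then γ_cer(G) + γ_cer(Ḡ) ≤ n + 1 and γ_cer(G) · γ_cer(Ḡ) ≤ n. Moreover, the following are equivalent: (a) γ_cer(G) + γ_cer(Ḡ) = n + 1; (b) γ_cer(G) · γ_cer(Ḡ) = n; (c) G or Ḡ has an isolated vertex and every vertex of it is isolated, a leaf, or adjacent to exactly one leaf (i.e., G or Ḡ is the complement of a complete graph, or the union of the corona of some graph and a positive number of isolated vertices). -/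
open Finset

variable {V : Type*} [Fintype V] [DecidableEq V]

/-- `D` is a dominating set of `G`: every vertex outside `D` has a neighbour in `D`. -/
def IsDomSet (G : SimpleGraph V) (D : Finset V) : Prop :=
  ∀ v ∉ D, ∃ u ∈ D, G.Adj u v

/-- `D` is a certified dominating set of `G`: it is dominating and every vertex of `D`
has either zero or at least two neighbours outside `D`. -/
def IsCertDomSet (G : SimpleGraph V) [DecidableRel G.Adj] (D : Finset V) : Prop :=
  IsDomSet G D ∧ ∀ v ∈ D, (G.neighborFinset v \ D).card = 0 ∨ 2 ≤ (G.neighborFinset v \ D).card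

/-- The domination number: minimum cardinality of a dominating set. -/
noncomputable def gamma (G : SimpleGraph V) : ℕ :=
  sInf {n | ∃ D : Finset V, IsDomSet G D ∧ D.card = n}

/-- The certified domination number: minimum cardinality of a certified dominating set. -/
noncomputable def gammaCer (G : SimpleGraph V) [DecidableRel G.Adj] : ℕ :=
  sInf {n | ∃ D : Finset V, IsCertDomSet G D ∧ D.card = n}

/-- A leaf is a vertex of degree one. -/
abbrev IsLeaf (G : SimpleGraph V) [DecidableRel G.Adj] (v : V) : Prop := G.degree v = 1

/-- The set of leaf-neighbours of a vertex. -/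
abbrev leafNbrs (G : SimpleGraph V) [DecidableRel G.Adj] (v : V) : Finset V :=
  (G.neighborFinset v).filter (fun l => G.degree l = 1)

/-- A weak support is a vertex adjacent to exactly one leaf. -/
abbrev IsWeakSupport (G : SimpleGraph V) [DecidableRel G.Adj] (v : V) : Prop :=
  (leafNbrs G v).card = 1

/-- A strong support is a vertex adjacent to at least two leaves. -/
abbrev IsStrongSupport (G : SimpleGraph V) [DecidableRel G.Adj] (v : V) : Prop :=
  2 ≤ (leafNbrs G v).card

/-!
An isolated vertex of `G` is universal in `Gᶜ` and vice versa, so since `n ≥ 3` the other graph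
has certified domination number `1` and no isolated vertex. Everything therefore reduces to:
`γ_cer(G) = n` iff every vertex is isolated, a leaf, or adjacent to exactly one leaf.

A neighbour of a leaf lies in every certified dominating set `D`; under the condition, every vertex
outside `D` is then a leaf, and its dominator would need two leaf neighbours, so `D = V`.
Conversely, a vertex with two leaf neighbours `l₁, l₂` yields `V ∖ {l₁, l₂}`. Otherwise there is an
*inner* vertex (degree at least two, no leaf neighbour). Take a maximal independent set `M` among
the inner vertices whose neighbours are all inner, and remove from `V` the inner vertices outside
`M` together with the leaves whose neighbour has an inner neighbour.
-/

set_option linter.unusedSectionVars false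

theorem exists_isIndepSet_forall_exists_adj (G : SimpleGraph V) (p : V → Prop) :
    ∃ M : Finset V, (∀ m ∈ M, p m) ∧ G.IsIndepSet (M : Set V) ∧
      ∀ c, p c → c ∉ M → ∃ m ∈ M, G.Adj m c := by
  classical
  obtain ⟨M, hM, hmax⟩ := exists_max_image
    ((univ.filter p).powerset.filter fun M : Finset V => G.IsIndepSet (M : Set V)) card
    ⟨∅, by simp⟩
  simp only [mem_filter, mem_powerset] at hM hmax
  refine ⟨M, fun m hm => (mem_filter.mp (hM.1 hm)).2, hM.2, fun c hc hcM => ?_⟩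
  by_contra! hno
  have hins : G.IsIndepSet (insert c M : Set V) :=
    Set.pairwise_insert.mpr ⟨hM.2, fun m hm _ => ⟨fun h => hno m hm h.symm, hno m hm⟩⟩
  have := hmax (insert c M)
    ⟨insert_subset (mem_filter.mpr ⟨mem_univ c, hc⟩) hM.1, by rwa [coe_insert]⟩
  rw [card_insert_of_notMem hcM] at this
  omega

section CertifiedDomination

variable {G : SimpleGraph V} [DecidableRel G.Adj]

variable (G) in
theorem isCertDomSet_univ : IsCertDomSet G univ :=
  ⟨fun v hv => absurd (mem_univ v) hv, fun v _ => Or.inl (by simp)⟩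

theorem isCertDomSet_compl_iff {T : Finset V} :
    IsCertDomSet G Tᶜ ↔
      (∀ t ∈ T, ∃ u ∉ T, G.Adj u t) ∧ ∀ v ∉ T, #(G.neighborFinset v ∩ T) ≠ 1 := by
  simp only [IsCertDomSet, IsDomSet, mem_compl, not_not, sdiff_compl, inf_eq_inter]
  exact and_congr Iff.rfl (forall₂_congr fun _ _ => by omega)

theorem gammaCer_le {D : Finset V} (hD : IsCertDomSet G D) : gammaCer G ≤ #D :=
  Nat.sInf_le ⟨D, hD, rfl⟩

theorem exists_isCertDomSet_card_eq_gammaCer :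
    ∃ D, IsCertDomSet G D ∧ #D = gammaCer G :=
  Nat.sInf_mem (s := {n | ∃ D : Finset V, IsCertDomSet G D ∧ #D = n})
    ⟨_, univ, isCertDomSet_univ G, rfl⟩

theorem gammaCer_le_card : gammaCer G ≤ Fintype.card V :=
  gammaCer_le (isCertDomSet_univ G)

theorem IsDomSet.nonempty [Nonempty V] {D : Finset V} (hD : IsDomSet G D) : D.Nonempty := by
  by_contra hD'
  obtain ⟨u, hu, -⟩ := hD (Classical.arbitrary V) (by simp_all [not_nonempty_iff_eq_empty])
  exact hD' ⟨u, hu⟩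

theorem SimpleGraph.IsUniversal.isCertDomSet_singleton {v : V} (hcard : 3 ≤ Fintype.card V)
    (hv : G.IsUniversal v) : IsCertDomSet G {v} := by
  refine ⟨fun u hu => ⟨v, mem_singleton_self v, hv (Ne.symm (by simpa using hu))⟩, ?_⟩
  rintro x hx
  rw [mem_singleton.mp hx, sdiff_singleton_eq_erase, erase_eq_of_notMem (by simp),
    G.card_neighborFinset_eq_degree, (G.degree_eq_card_sub_one v).mpr hv]
  omega

theorem SimpleGraph.IsUniversal.gammaCer_eq_one {v : V} (hcard : 3 ≤ Fintype.card V)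
    (hv : G.IsUniversal v) : gammaCer G = 1 := by
  have : Nonempty V := ⟨v⟩
  obtain ⟨D, hD, hDcard⟩ := exists_isCertDomSet_card_eq_gammaCer (G := G)
  have hle := gammaCer_le (hv.isCertDomSet_singleton hcard)
  have hpos := hD.1.nonempty.card_pos
  rw [card_singleton] at hle
  omega

theorem SimpleGraph.IsUniversal.not_exists_degree_eq_zero [Nontrivial V] {v : V}
    (hv : G.IsUniversal v) : ¬ ∃ u, G.degree u = 0 :=
  fun ⟨u, hu⟩ => hv.not_isIsolated u ((G.degree_eq_zero u).mp hu)

theorem mem_leafNbrs {v x : V} : x ∈ leafNbrs G v ↔ G.Adj v x ∧ IsLeaf G x := by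
  simp

theorem IsLeaf.eq_of_adj {l u u' : V} (hl : IsLeaf G l) (hu : G.Adj l u) (hu' : G.Adj l u') :
    u = u' :=
  (G.degree_eq_one_iff_existsUnique_adj.mp hl).unique hu hu'

theorem IsLeaf.neighborFinset_eq {l u : V} (hl : IsLeaf G l) (hu : G.Adj l u) :
    G.neighborFinset l = {u} :=
  eq_singleton_iff_unique_mem.mpr ⟨(G.mem_neighborFinset l u).mpr hu,
    fun _ hx => hl.eq_of_adj ((G.mem_neighborFinset _ _).mp hx) hu⟩

theorem two_le_degree_of_adj {v a b : V} (ha : G.Adj v a) (hb : G.Adj v b) (hab : a ≠ b) :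
    2 ≤ G.degree v :=
  one_lt_card.mpr ⟨a, by simpa, b, by simpa, hab⟩

theorem IsCertDomSet.mem_of_adj_isLeaf {D : Finset V} (hD : IsCertDomSet G D) {x l : V}
    (hl : IsLeaf G l) (hxl : G.Adj x l) : x ∈ D := by
  by_contra hx
  have hlD : l ∈ D := by
    by_contra hlD
    obtain ⟨d, hd, hdl⟩ := hD.1 l hlD
    exact hx (hl.eq_of_adj hdl.symm hxl.symm ▸ hd)
  have := hD.2 l hlD
  rw [hl.neighborFinset_eq hxl.symm, sdiff_eq_self_of_disjoint (disjoint_singleton_left.mpr hx),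
    card_singleton] at this
  omega

theorem IsCertDomSet.mem_of_isWeakSupport {D : Finset V} (hD : IsCertDomSet G D) {x : V}
    (hx : IsWeakSupport G x) : x ∈ D := by
  obtain ⟨l, hl⟩ := card_pos.mp (hx ▸ Nat.one_pos : 0 < #(leafNbrs G x))
  exact hD.mem_of_adj_isLeaf (mem_leafNbrs.mp hl).2 (mem_leafNbrs.mp hl).1

theorem IsCertDomSet.eq_univ (hall : ∀ v, G.degree v = 0 ∨ IsLeaf G v ∨ IsWeakSupport G v)
    {D : Finset V} (hD : IsCertDomSet G D) : D = univ := by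
  have hleaf : ∀ u ∉ D, IsLeaf G u := fun u hu => by
    obtain ⟨s, -, hsu⟩ := hD.1 u hu
    rcases hall u with h0 | h1 | hw
    · exact absurd h0 hsu.degree_pos_right.ne'
    · exact h1
    · exact absurd (hD.mem_of_isWeakSupport hw) hu
  by_contra hne
  obtain ⟨u, -, hu⟩ := exists_of_ssubset (ssubset_univ_iff.mpr hne)
  obtain ⟨s, hs, hsu⟩ := hD.1 u hu
  -- all outside neighbours of `s` are leaves, and certification gives at least two of them
  have hsub : G.neighborFinset s \ D ⊆ leafNbrs G s := fun x hx => by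
    rw [mem_sdiff, G.mem_neighborFinset] at hx
    exact mem_leafNbrs.mpr ⟨hx.1, hleaf x hx.2⟩
  have hu' : u ∈ G.neighborFinset s \ D := mem_sdiff.mpr ⟨(G.mem_neighborFinset s u).mpr hsu, hu⟩
  have h2 : 2 ≤ #(leafNbrs G s) :=
    ((hD.2 s hs).resolve_left (card_ne_zero_of_mem hu')).trans (card_le_card hsub)
  have hdeg : #(leafNbrs G s) ≤ G.degree s := card_filter_le _ _
  rcases hall s with h0 | h1 | hw <;> omega

theorem isCertDomSet_compl_pair {s l₁ l₂ : V} (hl₁ : IsLeaf G l₁) (hl₂ : IsLeaf G l₂)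
    (hs₁ : G.Adj s l₁) (hs₂ : G.Adj s l₂) (hne : l₁ ≠ l₂) : IsCertDomSet G {l₁, l₂}ᶜ := by
  have hs : s ∉ ({l₁, l₂} : Finset V) := by
    simp only [mem_insert, mem_singleton, not_or]
    exact ⟨hs₁.ne, hs₂.ne⟩
  refine isCertDomSet_compl_iff.mpr ⟨fun t ht => ⟨s, hs, ?_⟩, fun v hv => ?_⟩
  · rcases mem_insert.mp ht with rfl | ht
    exacts [hs₁, mem_singleton.mp ht ▸ hs₂]
  by_cases hvs : v = s
  · subst hvs
    rw [inter_eq_right.mpr (insert_subset (by simpa) (singleton_subset_iff.mpr (by simpa))),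
      card_pair hne]
    simp
  · rw [card_eq_zero.mpr]
    · simp
    refine eq_empty_of_forall_notMem fun x hx => hvs ?_
    rw [mem_inter, G.mem_neighborFinset] at hx
    rcases mem_insert.mp hx.2 with rfl | hx₂
    exacts [hl₁.eq_of_adj hx.1.symm hs₁.symm,
      hl₂.eq_of_adj (mem_singleton.mp hx₂ ▸ hx.1.symm) hs₂.symm]

def IsInner (G : SimpleGraph V) [DecidableRel G.Adj] (v : V) : Prop :=
  2 ≤ G.degree v ∧ ∀ x, G.Adj v x → ¬ IsLeaf G x

theorem IsInner.ne_of_isLeaf {b l : V} (hb : IsInner G b) (hl : IsLeaf G l) : l ≠ b := by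
  rintro rfl
  have := hb.1
  omega

theorem exists_adj_isLeaf_of_not_isInner {v : V} (hdeg : 2 ≤ G.degree v) (hv : ¬ IsInner G v) :
    ∃ l, G.Adj v l ∧ IsLeaf G l := by
  simpa [IsInner, hdeg] using hv

open Classical in
/-- The complement of a certified dominating set once `M` is a maximal independent set among the
inner vertices all of whose neighbours are inner. -/
noncomputable def outsideSet (G : SimpleGraph V) [DecidableRel G.Adj] (M : Finset V) :
    Finset V :=
  univ.filter fun v =>
    IsInner G v ∧ v ∉ M ∨ IsLeaf G v ∧ ∃ u b, G.Adj v u ∧ G.Adj u b ∧ IsInner G b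

section OutsideSet

variable {M : Finset V}

theorem mem_outsideSet {v : V} : v ∈ outsideSet G M ↔
    IsInner G v ∧ v ∉ M ∨ IsLeaf G v ∧ ∃ u b, G.Adj v u ∧ G.Adj u b ∧ IsInner G b := by
  simp [outsideSet]

theorem notMem_outsideSet {v : V} (hv : ¬ IsLeaf G v) (hM : IsInner G v → v ∈ M) :
    v ∉ outsideSet G M := by
  rw [mem_outsideSet]
  tauto

theorem mem_outsideSet_of_adj (hM : ∀ m ∈ M, ∀ x, G.Adj m x → IsInner G x)
    (hMind : G.IsIndepSet (M : Set V)) {m x : V} (hm : m ∈ M) (hmx : G.Adj m x) :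
    x ∈ outsideSet G M :=
  mem_outsideSet.mpr (Or.inl ⟨hM m hm x hmx, fun hx => hMind hm hx hmx.ne hmx⟩)

theorem outsideSet_nonempty (hM : ∀ m ∈ M, ∀ x, G.Adj m x → IsInner G x)
    (hMind : G.IsIndepSet (M : Set V)) {w : V} (hw : IsInner G w) :
    (outsideSet G M).Nonempty := by
  by_cases hwM : w ∈ M
  · obtain ⟨x, hwx⟩ := (G.degree_pos_iff_exists_adj w).mp (by have := hw.1; omega)
    exact ⟨x, mem_outsideSet_of_adj hM hMind hwM hwx⟩
  · exact ⟨w, mem_outsideSet.mpr (Or.inl ⟨hw, hwM⟩)⟩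

theorem exists_adj_notMem_outsideSet (hM : ∀ m ∈ M, IsInner G m)
    (hMdom : ∀ b, IsInner G b ∧ (∀ x, G.Adj b x → IsInner G x) → b ∉ M → ∃ m ∈ M, G.Adj m b)
    {t : V} (ht : t ∈ outsideSet G M) : ∃ u ∉ outsideSet G M, G.Adj u t := by
  rcases mem_outsideSet.mp ht with ⟨ht, htM⟩ | ⟨hl, u, b, htu, hub, hb⟩
  · by_cases hcore : ∀ x, G.Adj t x → IsInner G x
    · obtain ⟨m, hm, hmt⟩ := hMdom t ⟨ht, hcore⟩ htM
      exact ⟨m, notMem_outsideSet (fun hl => (hM m hm).ne_of_isLeaf hl rfl) fun _ => hm, hmt⟩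
    · push Not at hcore
      obtain ⟨x, htx, hx⟩ := hcore
      exact ⟨x, notMem_outsideSet (ht.2 x htx) (absurd · hx), htx.symm⟩
  · have hu : ¬ IsInner G u := fun hu => hu.2 t htu.symm hl
    have hdeg : 2 ≤ G.degree u := two_le_degree_of_adj htu.symm hub (hb.ne_of_isLeaf hl)
    exact ⟨u, notMem_outsideSet (by unfold IsLeaf; omega) (absurd · hu), htu.symm⟩

theorem card_neighborFinset_inter_outsideSet_ne_one
    (hM : ∀ m ∈ M, IsInner G m ∧ ∀ x, G.Adj m x → IsInner G x)
    (hMind : G.IsIndepSet (M : Set V)) {v : V} (hv : v ∉ outsideSet G M) :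
    #(G.neighborFinset v ∩ outsideSet G M) ≠ 1 := by
  by_cases hvM : v ∈ M
  · rw [inter_eq_left.mpr fun x hx => mem_outsideSet_of_adj (fun m hm => (hM m hm).2) hMind hvM
      ((G.mem_neighborFinset v x).mp hx), G.card_neighborFinset_eq_degree]
    have := (hM v hvM).1.1
    omega
  by_cases hb : ∃ b, G.Adj v b ∧ IsInner G b
  · -- `v` then has a leaf neighbour, and both it and the inner neighbour lie outside
    obtain ⟨b, hvb, hb⟩ := hb
    have hdeg : 2 ≤ G.degree v := by
      have := hb.2 v hvb.symm
      have := hvb.degree_pos_left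
      omega
    obtain ⟨l, hvl, hl⟩ := exists_adj_isLeaf_of_not_isInner hdeg fun hv' =>
      hv (mem_outsideSet.mpr (Or.inl ⟨hv', hvM⟩))
    have hbM : b ∉ M := fun hbM =>
      hv (mem_outsideSet_of_adj (fun m hm => (hM m hm).2) hMind hbM hvb.symm)
    have : 1 < #(G.neighborFinset v ∩ outsideSet G M) := one_lt_card.mpr
      ⟨l, mem_inter.mpr ⟨(G.mem_neighborFinset v l).mpr hvl,
          mem_outsideSet.mpr (Or.inr ⟨hl, v, b, hvl.symm, hvb, hb⟩)⟩,
        b, mem_inter.mpr ⟨(G.mem_neighborFinset v b).mpr hvb,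
          mem_outsideSet.mpr (Or.inl ⟨hb, hbM⟩)⟩,
        hb.ne_of_isLeaf hl⟩
    omega
  · push Not at hb
    rw [card_eq_zero.mpr (eq_empty_of_forall_notMem fun x hx => ?_)]
    · simp
    rw [mem_inter, G.mem_neighborFinset, mem_outsideSet] at hx
    rcases hx with ⟨hvx, ⟨hx, -⟩ | ⟨hl, u, b, hxu, hub, hb'⟩⟩
    · exact hb x hvx hx
    · exact hb b (hl.eq_of_adj hvx.symm hxu ▸ hub) hb'

end OutsideSet

theorem exists_isCertDomSet_card_lt_of_isInner {w : V} (hw : IsInner G w) :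
    ∃ D, IsCertDomSet G D ∧ #D < Fintype.card V := by
  obtain ⟨M, hM, hMind, hMdom⟩ := exists_isIndepSet_forall_exists_adj G
    fun v => IsInner G v ∧ ∀ x, G.Adj v x → IsInner G x
  refine ⟨(outsideSet G M)ᶜ, isCertDomSet_compl_iff.mpr
    ⟨fun t => exists_adj_notMem_outsideSet (fun m hm => (hM m hm).1) hMdom,
      fun v => card_neighborFinset_inter_outsideSet_ne_one hM hMind⟩, ?_⟩
  rw [card_compl]
  have := (outsideSet_nonempty (fun m hm => (hM m hm).2) hMind hw).card_pos
  have := card_le_univ (outsideSet G M)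
  omega

theorem exists_isCertDomSet_card_lt
    (hbad : ¬ ∀ v, G.degree v = 0 ∨ IsLeaf G v ∨ IsWeakSupport G v) :
    ∃ D, IsCertDomSet G D ∧ #D < Fintype.card V := by
  push Not at hbad
  obtain ⟨w, hw₀, hw₁, hwW⟩ := hbad
  have hdeg : 2 ≤ G.degree w := by omega
  rcases Nat.lt_or_gt_of_ne hwW with h₀ | h₂
  · refine exists_isCertDomSet_card_lt_of_isInner ⟨hdeg, fun x hwx hx => ?_⟩
    exact card_ne_zero_of_mem (mem_leafNbrs.mpr ⟨hwx, hx⟩) (by omega)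
  · obtain ⟨l₁, h₁, l₂, h₂, hne⟩ := one_lt_card.mp h₂
    rw [mem_leafNbrs] at h₁ h₂
    refine ⟨_, isCertDomSet_compl_pair h₁.2 h₂.2 h₁.1 h₂.1 hne, ?_⟩
    rw [card_compl, card_pair hne]
    have := Fintype.card_pos_iff.mpr ⟨w⟩
    omega

theorem gammaCer_eq_card_iff :
    gammaCer G = Fintype.card V ↔ ∀ v, G.degree v = 0 ∨ IsLeaf G v ∨ IsWeakSupport G v := by
  refine ⟨fun h => by_contra fun hbad => ?_, fun hall => ?_⟩
  · obtain ⟨D, hD, hlt⟩ := exists_isCertDomSet_card_lt hbad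
    have := gammaCer_le hD
    omega
  · obtain ⟨D, hD, hDcard⟩ := exists_isCertDomSet_card_eq_gammaCer (G := G)
    rw [← hDcard, hD.eq_univ hall, card_univ]

end CertifiedDomination

theorem nordhausGaddum_min_degree_zero (G : SimpleGraph V) [DecidableRel G.Adj]
    (hcard : 3 ≤ Fintype.card V)
    (h : (∃ v, G.degree v = 0) ∨ (∃ v, Gᶜ.degree v = 0)) :
    gammaCer G + gammaCer Gᶜ ≤ Fintype.card V + 1 ∧
    gammaCer G * gammaCer Gᶜ ≤ Fintype.card V ∧
    (gammaCer G + gammaCer Gᶜ = Fintype.card V + 1 ↔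
      gammaCer G * gammaCer Gᶜ = Fintype.card V) ∧
    (gammaCer G + gammaCer Gᶜ = Fintype.card V + 1 ↔
      (((∃ v, G.degree v = 0) ∧
          ∀ v : V, G.degree v = 0 ∨ IsLeaf G v ∨ IsWeakSupport G v) ∨
        ((∃ v, Gᶜ.degree v = 0) ∧
          ∀ v : V, Gᶜ.degree v = 0 ∨ IsLeaf Gᶜ v ∨ IsWeakSupport Gᶜ v))) := by
  have : Nontrivial V := Fintype.one_lt_card_iff_nontrivial.mp (by omega)
  have hG := gammaCer_le_card (G := G)
  have hGc := gammaCer_le_card (G := Gᶜ)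
  rcases h with hiso | hiso
  · have ⟨v, hv⟩ := hiso
    have hu : Gᶜ.IsUniversal v :=
      SimpleGraph.isUniversal_compl_iff_isIsolated.mpr ((G.degree_eq_zero v).mp hv)
    rw [hu.gammaCer_eq_one hcard, ← gammaCer_eq_card_iff (G := G)]
    simp only [hiso, hu.not_exists_degree_eq_zero, true_and, false_and, or_false, mul_one]
    omega
  · have ⟨v, hv⟩ := hiso
    have hu : G.IsUniversal v :=
      SimpleGraph.isIsolated_compl_iff_isUniversal.mp ((Gᶜ.degree_eq_zero v).mp hv)
    rw [hu.gammaCer_eq_one hcard, ← gammaCer_eq_card_iff (G := Gᶜ)]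
    simp only [hiso, hu.not_exists_degree_eq_zero, true_and, false_and, false_or, one_mul]
    omega
end

section
/- Let G be a finite simple graph of order at least two, with minimum degree at least one, having a unique minimum dominating set (i.e., there is exactly one dominating set of G of cardinality γ(G)). Then G is a DD2-graph; moreover, there exists a DD2-pair (D, D2) of G with |D| = γ(G). -/
open Finset

variable {V : Type*} [Fintype V] [DecidableEq V]

/-- `X` is a 2-dominating set of `G`: every vertex outside `X` has at least two
neighbours in `X`. -/
def IsTwoDomSet (G : SimpleGraph V) [DecidableRel G.Adj] (X : Finset V) : Prop :=
  ∀ v ∉ X, 2 ≤ (G.neighborFinset v ∩ X).card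

/-- `(D, D₂)` is a `DD₂`-pair of `G`. -/
def IsDD2Pair (G : SimpleGraph V) [DecidableRel G.Adj] (D D2 : Finset V) : Prop :=
  Disjoint D D2 ∧ IsDomSet G D ∧ IsTwoDomSet G D2

/-!
Let `D` be the unique minimum dominating set. A vertex `v ∈ D` with no neighbour outside `D`
could be dropped from `D`, since its own neighbours (it has one) lie in `D`; if `v` had exactly
one neighbour `u` outside `D`, exchanging `v` for `u` would give a second minimum dominating
set. So every vertex of `D` has two neighbours in the complement, which is thus 2-dominating.
-/

section

variable {G : SimpleGraph V} {D : Finset V} {u v : V}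

omit [Fintype V] [DecidableEq V] in
theorem gamma_le_card (hD : IsDomSet G D) : gamma G ≤ D.card :=
  Nat.sInf_le ⟨D, hD, rfl⟩

variable [DecidableRel G.Adj]

theorem IsDomSet.erase (hD : IsDomSet G D) (hN : G.neighborFinset v ⊆ D) (hu : G.Adj v u) :
    IsDomSet G (D.erase v) := by
  intro w hw
  by_cases hwv : w = v
  · subst hwv
    exact ⟨u, mem_erase.2 ⟨hu.ne.symm, hN (by simpa using hu)⟩, hu.symm⟩
  · obtain ⟨x, hxD, hxw⟩ := hD w fun hwD => hw (mem_erase.2 ⟨hwv, hwD⟩)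
    refine ⟨x, mem_erase.2 ⟨?_, hxD⟩, hxw⟩
    rintro rfl
    exact hw (mem_erase.2 ⟨hwv, hN (by simpa using hxw)⟩)

theorem IsDomSet.insert_erase (hD : IsDomSet G D) (hN : G.neighborFinset v \ D ⊆ {u})
    (hu : G.Adj v u) : IsDomSet G (insert u (D.erase v)) := by
  intro w hw
  by_cases hwv : w = v
  · exact ⟨u, mem_insert_self _ _, hwv ▸ hu.symm⟩
  · have hwD : w ∉ D := fun hwD => hw (mem_insert_of_mem (mem_erase.2 ⟨hwv, hwD⟩))
    obtain ⟨x, hxD, hxw⟩ := hD w hwD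
    by_cases hxv : x = v
    · subst hxv
      obtain rfl : w = u := mem_singleton.1 (hN (mem_sdiff.2 ⟨by simpa using hxw, hwD⟩))
      exact absurd (mem_insert_self w _) hw
    · exact ⟨x, mem_insert_of_mem (mem_erase.2 ⟨hxv, hxD⟩), hxw⟩

theorem nonempty_neighborFinset_sdiff_of_card_eq_gamma (hD : IsDomSet G D)
    (hDcard : D.card = gamma G) (hv : v ∈ D) (hdeg : 0 < G.degree v) :
    (G.neighborFinset v \ D).Nonempty := by
  by_contra hempty
  have hN : G.neighborFinset v ⊆ D :=
    sdiff_eq_empty_iff_subset.1 (not_nonempty_iff_eq_empty.1 hempty)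
  obtain ⟨u, hu⟩ := card_pos.1 hdeg
  have hle := gamma_le_card (hD.erase hN ((G.mem_neighborFinset v u).1 hu))
  rw [card_erase_of_mem hv] at hle
  have := card_pos.2 ⟨v, hv⟩
  omega

theorem card_neighborFinset_sdiff_ne_one_of_unique
    (hD : IsDomSet G D) (hDcard : D.card = gamma G)
    (huniq : ∀ D' : Finset V, IsDomSet G D' ∧ D'.card = gamma G → D' = D) (hv : v ∈ D) :
    (G.neighborFinset v \ D).card ≠ 1 := by
  intro hone
  obtain ⟨u, hvu⟩ := card_eq_one.1 hone
  obtain ⟨hu, huD⟩ := mem_sdiff.1 (hvu ▸ mem_singleton_self u)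
  have hswap_card : (insert u (D.erase v)).card = gamma G := by
    rw [card_insert_of_notMem fun h => huD (mem_of_mem_erase h), card_erase_add_one hv, hDcard]
  have hswap :=
    huniq _ ⟨hD.insert_erase hvu.subset ((G.mem_neighborFinset v u).1 hu), hswap_card⟩
  exact huD (hswap ▸ mem_insert_self u _)

theorem isTwoDomSet_compl (h : ∀ v ∈ D, 2 ≤ (G.neighborFinset v \ D).card) :
    IsTwoDomSet G Dᶜ := fun v hv => by
  rw [← sdiff_eq_inter_compl]
  exact h v (by simpa using hv)

end

theorem dd2_of_unique_min_domSet_general (G : SimpleGraph V) [DecidableRel G.Adj]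
    (hdeg : ∀ v : V, 1 ≤ G.degree v)
    (huniq : ∃! D : Finset V, IsDomSet G D ∧ D.card = gamma G) :
    (∃ D D2 : Finset V, IsDD2Pair G D D2) ∧
      ∃ D D2 : Finset V, IsDD2Pair G D D2 ∧ D.card = gamma G := by
  obtain ⟨D, ⟨hD, hDcard⟩, huni⟩ := huniq
  have htwo : ∀ v ∈ D, 2 ≤ (G.neighborFinset v \ D).card := fun v hv => by
    have hpos := card_pos.2 (nonempty_neighborFinset_sdiff_of_card_eq_gamma hD hDcard hv (hdeg v))
    have hne := card_neighborFinset_sdiff_ne_one_of_unique hD hDcard huni hv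
    omega
  have hpair : IsDD2Pair G D Dᶜ := ⟨disjoint_compl_right, hD, isTwoDomSet_compl htwo⟩
  exact ⟨⟨D, Dᶜ, hpair⟩, D, Dᶜ, hpair, hDcard⟩

theorem dd2_of_unique_min_domSet (G : SimpleGraph V) [DecidableRel G.Adj]
    (hcard : 2 ≤ Fintype.card V)
    (hdeg : ∀ v : V, 1 ≤ G.degree v)
    (huniq : ∃! D : Finset V, IsDomSet G D ∧ D.card = gamma G) :
    (∃ D D2 : Finset V, IsDD2Pair G D D2) ∧
      ∃ D D2 : Finset V, IsDD2Pair G D D2 ∧ D.card = gamma G :=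
  dd2_of_unique_min_domSet_general G hdeg huniq
end
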